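/- arXiv:1303.7100 — 2 statements merged into one kernel-verified Lean document; each statement's English description precedes it below -/
import Mathlib

section
/- Under Assumptions (H), the Dyson–Phillips iterates have the following continuity properties: (a) for every n ≥ 1, every t ≥ 0 and every u ∈ E, lim_{h→0⁺} V_n(t+h,t)u = 0 in E; (b) for every n ∈ ℕ, s ≥ 0 and u ∈ E, the map t ∈ [s,∞) ↦ V_n(t,s)u is continuous; (c) for every n ∈ ℕ, every r ≥ 0, t > r and u ∈ E, the map s ∈ (r,t) ↦ V_n(t,s)u is continuous. -/
/-!
On the positive cone every iterate is a contraction, and the integral defining `V (n+1) t s u`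
has norm at most `‖u‖ - ‖U t s u‖` by (H)(iv); this bound tends to `0` whenever `U t s u → u`,
which gives (a) and controls the short pieces of the integrals in (c). Continuity in `t` is
dominated convergence for an integral whose upper limit moves with the parameter. Continuity in
`s` splits the integral at the limit point using the evolution property, the term that is left
being controlled by the Banach–Steinhaus bound on the iterates. Both continuity statements go by
induction on `n` (measurability of the integrand needs continuity in `s` of the previous
iterate), and general vectors reduce to positive ones because the cone is generating.
-/

open MeasureTheory Set Filter Topology

/-- An abstract state space: a real normed space together with a generating positive
cone on which the norm is additive, an evolution family `U`, and a family of
(unbounded) nonnegative operators `B t` with domains `DB t`, satisfying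
Assumptions (H) of the paper. -/
structure PerturbedSetting (E : Type*) [NormedAddCommGroup E] [NormedSpace ℝ E] where
  pos : Set E
  zero_mem : (0 : E) ∈ pos
  add_mem : ∀ u v : E, u ∈ pos → v ∈ pos → u + v ∈ pos
  smul_mem : ∀ c : ℝ, 0 ≤ c → ∀ u ∈ pos, c • u ∈ pos
  generating : ∀ u : E, ∃ v w : E, v ∈ pos ∧ w ∈ pos ∧ u = v - w
  norm_add : ∀ u v : E, u ∈ pos → v ∈ pos → ‖u + v‖ = ‖u‖ + ‖v‖
  U : ℝ → ℝ → E →L[ℝ] E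
  U_cont : ∀ u : E, ContinuousOn (fun p : ℝ × ℝ => U p.1 p.2 u)
    {p : ℝ × ℝ | 0 ≤ p.2 ∧ p.2 ≤ p.1}
  U_comp : ∀ t r s : ℝ, 0 ≤ s → s ≤ r → r ≤ t → ∀ u : E, U t s u = U t r (U r s u)
  U_id : ∀ t : ℝ, 0 ≤ t → ∀ u : E, U t t u = u
  U_bound : ∃ C β : ℝ, 0 < C ∧ 0 < β ∧
    ∀ t s : ℝ, 0 ≤ s → s ≤ t → ‖U t s‖ ≤ C * Real.exp (β * (t - s))
  DB : ℝ → Set E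
  B : ℝ → E → E
  DB_zero : ∀ t : ℝ, (0 : E) ∈ DB t
  DB_add : ∀ t : ℝ, ∀ u ∈ DB t, ∀ v ∈ DB t, u + v ∈ DB t
  DB_smul : ∀ t c : ℝ, ∀ u ∈ DB t, c • u ∈ DB t
  B_add : ∀ t : ℝ, ∀ u ∈ DB t, ∀ v ∈ DB t, B t (u + v) = B t u + B t v
  B_smul : ∀ t c : ℝ, ∀ u ∈ DB t, B t (c • u) = c • B t u
  U_pos : ∀ t s : ℝ, 0 ≤ s → s ≤ t → ∀ u ∈ pos, U t s u ∈ pos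
  U_contr : ∀ t s : ℝ, 0 ≤ s → s ≤ t → ∀ u ∈ pos, ‖U t s u‖ ≤ ‖u‖
  B_pos : ∀ t : ℝ, 0 ≤ t → ∀ u ∈ DB t, u ∈ pos → B t u ∈ pos
  BU_dom : ∀ (u : E) (s : ℝ), 0 ≤ s →
    ∀ᵐ t ∂(volume.restrict (Set.Ici s)), U t s u ∈ DB t
  BU_meas : ∀ (u : E) (s : ℝ), 0 ≤ s →
    AEStronglyMeasurable (fun t => B t (U t s u)) (volume.restrict (Set.Ici s))
  BU_integrable : ∀ u ∈ pos, ∀ s t : ℝ, 0 ≤ s → s ≤ t →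
    IntegrableOn (fun τ => B τ (U τ s u)) (Set.Ioc s t) volume
  BU_int : ∀ u ∈ pos, ∀ s t : ℝ, 0 ≤ s → s ≤ t →
    (∫ τ in s..t, ‖B τ (U τ s u)‖) ≤ ‖u‖ - ‖U t s u‖

lemma tendsto_zero_of_norm_le_norm_sub_norm {α F : Type*} [SeminormedAddCommGroup F]
    {l : Filter α} {x y : α → F} {u : F} (hy : Tendsto y l (𝓝 u))
    (hx : ∀ᶠ a in l, ‖x a‖ ≤ ‖u‖ - ‖y a‖) : Tendsto x l (𝓝 0) := by
  refine squeeze_zero_norm' hx ?_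
  simpa using (tendsto_const_nhds (x := ‖u‖)).sub hy.norm

theorem aestronglyMeasurable_clm_apply_of_continuousOn {α 𝕜 F G : Type*}
    [TopologicalSpace α] [SecondCountableTopology α] [MeasurableSpace α]
    [OpensMeasurableSpace α] {μ : Measure α} [NontriviallyNormedField 𝕜]
    [NormedAddCommGroup F] [NormedSpace 𝕜 F] [NormedAddCommGroup G] [NormedSpace 𝕜 G]
    {φ : α → F →L[𝕜] G} {A : Set α} (hA : MeasurableSet A)
    (hφ : ∀ w, ContinuousOn (fun a => φ a w) A) {g : α → F}
    (hg : AEStronglyMeasurable g (μ.restrict A)) :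
    AEStronglyMeasurable (fun a => φ a (g a)) (μ.restrict A) := by
  obtain ⟨g', hg', hgg'⟩ := hg
  have simple : ∀ f : SimpleFunc α F,
      AEStronglyMeasurable (fun a => φ a (f a)) (μ.restrict A) := by
    refine SimpleFunc.induction (fun c {B} hB => ?_) (fun f₁ f₂ _ h₁ h₂ => ?_)
    · have : (fun a => φ a ((SimpleFunc.piecewise B hB (.const α c) (.const α 0)) a))
          = B.indicator fun a => φ a c := by
        ext a
        by_cases ha : a ∈ B <;> simp [ha]
      rw [this]
      exact ((hφ c).aestronglyMeasurable hA).indicator hB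
    · simp only [SimpleFunc.coe_add, Pi.add_apply, map_add]
      exact h₁.add h₂
  have approx : AEStronglyMeasurable (fun a => φ a (g' a)) (μ.restrict A) :=
    aestronglyMeasurable_of_tendsto_ae atTop (fun k => simple (hg'.approx k))
      (ae_of_all _ fun a => ((φ a).continuous.tendsto _).comp (hg'.tendsto_approx a))
  exact approx.congr (hgg'.mono fun a ha => by simp only [ha])

theorem continuousWithinAt_integral_upper_of_dominated {E : Type*} [NormedAddCommGroup E]
    [NormedSpace ℝ E] {f : ℝ → ℝ → E} {bound : ℝ → ℝ} {s t₀ T : ℝ} (hst₀ : s ≤ t₀)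
    (ht₀T : t₀ < T) (hmeas : ∀ t, AEStronglyMeasurable (f t) (volume.restrict (Ioc s t)))
    (hbound : ∀ t, ∀ᵐ τ ∂volume.restrict (Ioc s t), ‖f t τ‖ ≤ bound τ)
    (hint : IntegrableOn bound (Ioc s T))
    (hcont : ∀ τ ∈ Ioo s t₀, ContinuousAt (fun t => f t τ) t₀) :
    ContinuousWithinAt (fun t => ∫ τ in s..t, f t τ) (Ici s) t₀ := by
  set F : ℝ → ℝ → E := fun t => (Iic t).indicator (f t)
  have hF : ∀ t ∈ Icc s T, ∫ τ in s..t, f t τ = ∫ τ in Ioc s T, F t τ := by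
    intro t ht
    rw [intervalIntegral.integral_of_le ht.1, integral_indicator measurableSet_Iic,
      Measure.restrict_restrict measurableSet_Iic, inter_comm, Ioc_inter_Iic, min_eq_right ht.2]
  have hsub : ∀ t, Iic t ∩ Ioc s T ⊆ Ioc s t := fun t τ hτ => ⟨hτ.2.1, hτ.1⟩
  have hlim : Tendsto (fun t => ∫ τ in Ioc s T, F t τ) (𝓝[Ici s] t₀)
      (𝓝 (∫ τ in Ioc s T, F t₀ τ)) := by
    refine tendsto_integral_filter_of_dominated_convergence (fun τ => ‖bound τ‖)
      (.of_forall fun t => ?_) (.of_forall fun t => ?_) hint.norm ?_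
    · refine (aestronglyMeasurable_indicator_iff measurableSet_Iic).2 ?_
      rw [Measure.restrict_restrict measurableSet_Iic]
      exact (hmeas t).mono_measure (Measure.restrict_mono (hsub t) le_rfl)
    · have h := ae_restrict_of_ae_restrict_of_subset (hsub t) (hbound t)
      rw [← Measure.restrict_restrict measurableSet_Iic] at h
      filter_upwards [(ae_restrict_iff' measurableSet_Iic).1 h] with τ hτ
      by_cases hτt : τ ∈ Iic t
      · simpa [F, hτt] using (hτ hτt).trans (le_abs_self _)
      · simp [F, hτt]
    · filter_upwards [ae_restrict_mem measurableSet_Ioc,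
        ae_restrict_of_ae (Measure.ae_ne volume t₀)] with τ hτ hτt₀
      rcases hτt₀.lt_or_gt with hlt | hgt
      · have hF : ∀ᶠ t in 𝓝[Ici s] t₀, F t τ = f t τ :=
          eventually_nhdsWithin_of_eventually_nhds <| (eventually_ge_nhds hlt).mono
            fun t ht => indicator_of_mem (mem_Iic.2 ht) _
        rw [show F t₀ τ = f t₀ τ from indicator_of_mem (mem_Iic.2 hlt.le) _]
        exact ((hcont τ ⟨hτ.1, hlt⟩).tendsto.mono_left nhdsWithin_le_nhds).congr'
          (hF.mono fun t ht => ht.symm)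
      · have hF : ∀ᶠ t in 𝓝[Ici s] t₀, F t τ = 0 :=
          eventually_nhdsWithin_of_eventually_nhds <| (eventually_lt_nhds hgt).mono
            fun t ht => indicator_of_notMem (notMem_Iic.2 ht) _
        rw [show F t₀ τ = 0 from indicator_of_notMem (notMem_Iic.2 hgt) _]
        exact tendsto_const_nhds.congr' (hF.mono fun t ht => ht.symm)
  have hIcc : ∀ᶠ t in 𝓝[Ici s] t₀, t ∈ Icc s T :=
    inter_mem self_mem_nhdsWithin (mem_nhdsWithin_of_mem_nhds (Iic_mem_nhds ht₀T))
  rw [ContinuousWithinAt, hF t₀ ⟨hst₀, ht₀T.le⟩]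
  exact hlim.congr' (hIcc.mono fun t ht => (hF t ht).symm)

namespace PerturbedSetting

variable {E : Type*} [NormedAddCommGroup E] [NormedSpace ℝ E] (S : PerturbedSetting E)

lemma continuousOn_U_fst {s : ℝ} (hs : 0 ≤ s) (u : E) :
    ContinuousOn (fun t => S.U t s u) (Ici s) :=
  (S.U_cont u).comp (continuous_id.prodMk continuous_const).continuousOn
    fun _ ht => ⟨hs, ht⟩

lemma continuousOn_U_snd (t : ℝ) (u : E) : ContinuousOn (fun s => S.U t s u) (Icc 0 t) :=
  (S.U_cont u).comp (continuous_const.prodMk continuous_id).continuousOn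
    fun _ hs => ⟨hs.1, hs.2⟩

lemma tendsto_of_forall_pos {α F : Type*} [NormedAddCommGroup F] [NormedSpace ℝ F]
    {l : Filter α} {L : α → E →L[ℝ] F} {L₀ : E →L[ℝ] F}
    (h : ∀ u ∈ S.pos, Tendsto (fun a => L a u) l (𝓝 (L₀ u))) (u : E) :
    Tendsto (fun a => L a u) l (𝓝 (L₀ u)) := by
  obtain ⟨v, w, hv, hw, rfl⟩ := S.generating u
  simpa only [map_sub] using (h v hv).sub (h w hw)

lemma continuousOn_of_forall_pos {α F : Type*} [TopologicalSpace α] [NormedAddCommGroup F]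
    [NormedSpace ℝ F] {L : α → E →L[ℝ] F} {A : Set α}
    (h : ∀ u ∈ S.pos, ContinuousOn (fun a => L a u) A) (u : E) : ContinuousOn (fun a => L a u) A :=
  fun x hx => S.tendsto_of_forall_pos (fun v hv => h v hv x hx) u

lemma ae_B_U_mem_pos {u : E} (hu : u ∈ S.pos) {s : ℝ} (hs : 0 ≤ s) (t : ℝ) :
    ∀ᵐ τ ∂volume.restrict (Ioc s t), S.B τ (S.U τ s u) ∈ S.pos := by
  filter_upwards [ae_restrict_of_ae_restrict_of_subset (fun _ hτ => hτ.1.le) (S.BU_dom u s hs),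
    ae_restrict_mem measurableSet_Ioc] with τ hdom hτ
  exact S.B_pos τ (hs.trans hτ.1.le) _ hdom (S.U_pos τ s hs hτ.1.le u hu)

section Integrand

variable {W : ℝ → E →L[ℝ] E} {u : E} {s t : ℝ}

lemma norm_integral_B_U_le (hu : u ∈ S.pos) (hs : 0 ≤ s) (hst : s ≤ t)
    (hW : ∀ τ ∈ Ioc s t, ∀ x ∈ S.pos, ‖W τ x‖ ≤ ‖x‖) :
    ‖∫ τ in s..t, W τ (S.B τ (S.U τ s u))‖ ≤ ‖u‖ - ‖S.U t s u‖ :=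
  calc ‖∫ τ in s..t, W τ (S.B τ (S.U τ s u))‖
      ≤ ∫ τ in Ioc s t, ‖W τ (S.B τ (S.U τ s u))‖ := by
        rw [intervalIntegral.integral_of_le hst]
        exact norm_integral_le_integral_norm _
    _ ≤ ∫ τ in Ioc s t, ‖S.B τ (S.U τ s u)‖ := by
        refine integral_mono_of_nonneg (.of_forall fun _ => norm_nonneg _)
          (S.BU_integrable u hu s t hs hst).norm ?_
        filter_upwards [S.ae_B_U_mem_pos hu hs t, ae_restrict_mem measurableSet_Ioc]
          with τ hpos hτ
        exact hW τ hτ _ hpos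
    _ ≤ ‖u‖ - ‖S.U t s u‖ := by
        rw [← intervalIntegral.integral_of_le hst]
        exact S.BU_int u hu s t hs hst

lemma aestronglyMeasurable_B_U (hs : 0 ≤ s) (u : E)
    (hW : ∀ w, ContinuousOn (fun τ => W τ w) (Ioo s t)) :
    AEStronglyMeasurable (fun τ => W τ (S.B τ (S.U τ s u))) (volume.restrict (Ioc s t)) := by
  rw [← Measure.restrict_congr_set Ioo_ae_eq_Ioc]
  exact aestronglyMeasurable_clm_apply_of_continuousOn measurableSet_Ioo hW
    ((S.BU_meas u s hs).mono_measure (Measure.restrict_mono (fun _ hτ => hτ.1.le) le_rfl))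

lemma integrableOn_B_U (hu : u ∈ S.pos) (hs : 0 ≤ s) (hst : s ≤ t)
    (hWc : ∀ w, ContinuousOn (fun τ => W τ w) (Ioo s t))
    (hW : ∀ τ ∈ Ioc s t, ∀ x ∈ S.pos, ‖W τ x‖ ≤ ‖x‖) :
    IntegrableOn (fun τ => W τ (S.B τ (S.U τ s u))) (Ioc s t) := by
  refine (S.BU_integrable u hu s t hs hst).norm.mono' (S.aestronglyMeasurable_B_U hs u hWc) ?_
  filter_upwards [S.ae_B_U_mem_pos hu hs t, ae_restrict_mem measurableSet_Ioc] with τ hpos hτ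
  exact hW τ hτ _ hpos

end Integrand

structure IsDysonPhillips (V : ℕ → ℝ → ℝ → E →L[ℝ] E) : Prop where
  zero : ∀ t s : ℝ, 0 ≤ s → s ≤ t → ∀ u : E, V 0 t s u = S.U t s u
  succ : ∀ n : ℕ, ∀ t s : ℝ, 0 ≤ s → s ≤ t → ∀ u : E,
    V (n + 1) t s u = ∫ r in s..t, V n t r (S.B r (S.U r s u))

namespace IsDysonPhillips

variable {S} {V : ℕ → ℝ → ℝ → E →L[ℝ] E} {t s : ℝ} {u : E}

lemma norm_apply_le (hV : S.IsDysonPhillips V) (n : ℕ) (hs : 0 ≤ s) (hst : s ≤ t)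
    (hu : u ∈ S.pos) : ‖V n t s u‖ ≤ ‖u‖ := by
  induction n generalizing s u with
  | zero => rw [hV.zero t s hs hst u]; exact S.U_contr t s hs hst u hu
  | succ n ih =>
    rw [hV.succ n t s hs hst u]
    have := S.norm_integral_B_U_le hu hs hst fun τ hτ x hx => ih (hs.trans hτ.1.le) hτ.2 hx
    linarith [norm_nonneg (S.U t s u)]

lemma norm_succ_apply_le (hV : S.IsDysonPhillips V) (n : ℕ) (hs : 0 ≤ s) (hst : s ≤ t)
    (hu : u ∈ S.pos) : ‖V (n + 1) t s u‖ ≤ ‖u‖ - ‖S.U t s u‖ := by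
  rw [hV.succ n t s hs hst u]
  exact S.norm_integral_B_U_le hu hs hst fun τ hτ x hx =>
    hV.norm_apply_le n (hs.trans hτ.1.le) hτ.2 hx

lemma exists_norm_le [CompleteSpace E] (hV : S.IsDysonPhillips V) :
    ∃ M, ∀ n t s, 0 ≤ s → s ≤ t → ‖V n t s‖ ≤ M := by
  have bdd : ∀ x : E, ∃ C, ∀ i : ℕ × {p : ℝ × ℝ // 0 ≤ p.2 ∧ p.2 ≤ p.1},
      ‖V i.1 i.2.1.1 i.2.1.2 x‖ ≤ C := by
    intro x
    obtain ⟨v, w, hv, hw, rfl⟩ := S.generating x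
    refine ⟨‖v‖ + ‖w‖, fun ⟨n, ⟨_, _⟩, hs, hst⟩ => ?_⟩
    rw [map_sub]
    exact (norm_sub_le _ _).trans
      (add_le_add (hV.norm_apply_le n hs hst hv) (hV.norm_apply_le n hs hst hw))
  obtain ⟨M, hM⟩ := banach_steinhaus bdd
  exact ⟨M, fun n t s hs hst => hM (n, ⟨(t, s), hs, hst⟩)⟩

lemma tendsto_succ_apply_zero (hV : S.IsDysonPhillips V) (n : ℕ) (ht : 0 ≤ t) (u : E) :
    Tendsto (fun h => V (n + 1) (t + h) t u) (𝓝[>] 0) (𝓝 0) := by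
  have hU : ∀ x, Tendsto (fun h => S.U (t + h) t x) (𝓝[>] 0) (𝓝 x) := fun x => by
    have := ((S.continuousOn_U_fst ht x) t self_mem_Ici).comp_of_eq
      (continuous_const_add t).continuousWithinAt
      (show MapsTo (t + ·) (Ioi 0) (Ici t) from
        fun h hh => mem_Ici.2 (le_add_of_nonneg_right (le_of_lt hh)))
      (add_zero t)
    simpa only [ContinuousWithinAt, Function.comp_def, add_zero, S.U_id t ht] using this
  have hpos : ∀ x ∈ S.pos,
      Tendsto (fun h => V (n + 1) (t + h) t x) (𝓝[>] 0) (𝓝 ((0 : E →L[ℝ] E) x)) := by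
    intro x hx
    rw [zero_apply]
    exact tendsto_zero_of_norm_le_norm_sub_norm (hU x) <| eventually_mem_nhdsWithin.mono
      fun h hh => hV.norm_succ_apply_le n ht (le_add_of_nonneg_right (le_of_lt hh)) hx
  simpa using S.tendsto_of_forall_pos hpos u

lemma succ_apply_eq_integral_add (hV : S.IsDysonPhillips V) (n : ℕ) {a b : ℝ} (ha : 0 ≤ a)
    (hab : a ≤ b) (hbt : b ≤ t)
    (hint : IntervalIntegrable (fun τ => V n t τ (S.B τ (S.U τ a u))) volume a t) :
    V (n + 1) t a u =
      (∫ τ in a..b, V n t τ (S.B τ (S.U τ a u))) + V (n + 1) t b (S.U b a u) := by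
  have htail : ∫ τ in b..t, V n t τ (S.B τ (S.U τ a u)) = V (n + 1) t b (S.U b a u) := by
    rw [hV.succ n t b (ha.trans hab) hbt]
    refine intervalIntegral.integral_congr fun τ hτ => ?_
    rw [uIcc_of_le hbt] at hτ
    rw [S.U_comp τ b a ha hab hτ.1]
  have hb : b ∈ uIcc a t := mem_uIcc_of_le hab hbt
  rw [hV.succ n t a ha (hab.trans hbt), ← htail,
    intervalIntegral.integral_add_adjacent_intervals (hint.mono_set (uIcc_subset_uIcc_left hb))
      (hint.mono_set (uIcc_subset_uIcc_right hb))]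

lemma intervalIntegrable_B_U (hV : S.IsDysonPhillips V) (n : ℕ)
    (hc : ∀ w, ContinuousOn (fun s => V n t s w) (Ico 0 t)) (hu : u ∈ S.pos) {a : ℝ}
    (ha : 0 ≤ a) (hat : a ≤ t) :
    IntervalIntegrable (fun τ => V n t τ (S.B τ (S.U τ a u))) volume a t := by
  rw [intervalIntegrable_iff_integrableOn_Ioc_of_le hat]
  exact S.integrableOn_B_U hu ha hat
    (fun w => (hc w).mono fun τ hτ => ⟨ha.trans hτ.1.le, hτ.2⟩)
    fun τ hτ x hx => hV.norm_apply_le n (ha.trans hτ.1.le) hτ.2 hx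

lemma continuousWithinAt_succ_snd_left (hV : S.IsDysonPhillips V) (n : ℕ)
    (hc : ∀ w, ContinuousOn (fun s => V n t s w) (Ico 0 t)) (hu : u ∈ S.pos) {s₀ : ℝ}
    (hs₀ : s₀ ∈ Ico 0 t) : ContinuousWithinAt (fun s => V (n + 1) t s u) (Icc 0 s₀) s₀ := by
  have hsplit : ∀ s ∈ Icc 0 s₀, V (n + 1) t s u =
      (∫ τ in s..s₀, V n t τ (S.B τ (S.U τ s u))) + V (n + 1) t s₀ (S.U s₀ s u) :=
    fun s hs => hV.succ_apply_eq_integral_add n hs.1 hs.2 hs₀.2.le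
      (hV.intervalIntegrable_B_U n hc hu hs.1 (hs.2.trans hs₀.2.le))
  have hU : Tendsto (fun s => S.U s₀ s u) (𝓝[Icc 0 s₀] s₀) (𝓝 u) := by
    simpa only [ContinuousWithinAt, S.U_id s₀ hs₀.1] using
      S.continuousOn_U_snd s₀ u s₀ ⟨hs₀.1, le_rfl⟩
  have hint : Tendsto (fun s => ∫ τ in s..s₀, V n t τ (S.B τ (S.U τ s u)))
      (𝓝[Icc 0 s₀] s₀) (𝓝 0) :=
    tendsto_zero_of_norm_le_norm_sub_norm hU <| eventually_mem_nhdsWithin.mono fun s hs =>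
      S.norm_integral_B_U_le hu hs.1 hs.2 fun τ hτ x hx =>
        hV.norm_apply_le n (hs.1.trans hτ.1.le) (hτ.2.trans hs₀.2.le) hx
  have := hint.add (((V (n + 1) t s₀).continuous.tendsto u).comp hU)
  rw [zero_add] at this
  exact this.congr' (eventually_mem_nhdsWithin.mono fun s hs => (hsplit s hs).symm)

lemma continuousWithinAt_succ_snd_right [CompleteSpace E] (hV : S.IsDysonPhillips V) (n : ℕ)
    (hc : ∀ w, ContinuousOn (fun s => V n t s w) (Ico 0 t)) (hu : u ∈ S.pos) {s₀ : ℝ}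
    (hs₀ : s₀ ∈ Ico 0 t) : ContinuousWithinAt (fun s => V (n + 1) t s u) (Ico s₀ t) s₀ := by
  obtain ⟨M, hM⟩ := hV.exists_norm_le
  have hsplit : ∀ s ∈ Ico s₀ t, V (n + 1) t s u = V (n + 1) t s₀ u
      - (∫ τ in s₀..s, V n t τ (S.B τ (S.U τ s₀ u))) + V (n + 1) t s (u - S.U s s₀ u) := by
    intro s hs
    rw [hV.succ_apply_eq_integral_add n hs₀.1 hs.1 hs.2.le
      (hV.intervalIntegrable_B_U n hc hu hs₀.1 hs₀.2.le), map_sub]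
    abel
  have hU : Tendsto (fun s => S.U s s₀ u) (𝓝[Ico s₀ t] s₀) (𝓝 u) := by
    simpa only [ContinuousWithinAt, S.U_id s₀ hs₀.1] using
      (S.continuousOn_U_fst hs₀.1 u s₀ self_mem_Ici).mono Ico_subset_Ici_self
  have hint : Tendsto (fun s => ∫ τ in s₀..s, V n t τ (S.B τ (S.U τ s₀ u)))
      (𝓝[Ico s₀ t] s₀) (𝓝 0) :=
    tendsto_zero_of_norm_le_norm_sub_norm hU <| eventually_mem_nhdsWithin.mono fun s hs =>
      S.norm_integral_B_U_le hu hs₀.1 hs.1 fun τ hτ x hx =>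
        hV.norm_apply_le n (hs₀.1.trans hτ.1.le) (hτ.2.trans hs.2.le) hx
  have hdefect : Tendsto (fun s => V (n + 1) t s (u - S.U s s₀ u)) (𝓝[Ico s₀ t] s₀) (𝓝 0) := by
    refine squeeze_zero_norm' (eventually_mem_nhdsWithin.mono fun s hs =>
      (V (n + 1) t s).le_of_opNorm_le (hM (n + 1) t s (hs₀.1.trans hs.1) hs.2.le) _) ?_
    simpa using ((tendsto_const_nhds (x := u)).sub hU).norm.const_mul M
  have := ((tendsto_const_nhds (x := V (n + 1) t s₀ u)).sub hint).add hdefect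
  rw [sub_zero, add_zero] at this
  exact this.congr' (eventually_mem_nhdsWithin.mono fun s hs => (hsplit s hs).symm)

theorem continuousOn_snd [CompleteSpace E] (hV : S.IsDysonPhillips V) (n : ℕ) (t : ℝ)
    (u : E) : ContinuousOn (fun s => V n t s u) (Ico 0 t) := by
  induction n generalizing u with
  | zero =>
    exact ((S.continuousOn_U_snd t u).mono Ico_subset_Icc_self).congr
      fun s hs => hV.zero t s hs.1 hs.2.le u
  | succ n ih =>
    refine S.continuousOn_of_forall_pos (L := fun s => V (n + 1) t s)
      (fun u hu s₀ hs₀ => ?_) u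
    refine ((hV.continuousWithinAt_succ_snd_left n ih hu hs₀).union
      (hV.continuousWithinAt_succ_snd_right n ih hu hs₀)).mono ?_
    rintro s ⟨hs0, hst⟩
    rcases le_total s s₀ with h | h
    exacts [Or.inl ⟨hs0, h⟩, Or.inr ⟨h, hst⟩]

theorem continuousOn_fst [CompleteSpace E] (hV : S.IsDysonPhillips V) (n : ℕ) (hs : 0 ≤ s)
    (u : E) : ContinuousOn (fun t => V n t s u) (Ici s) := by
  induction n generalizing s u with
  | zero => exact (S.continuousOn_U_fst hs u).congr fun t ht => hV.zero t s hs ht u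
  | succ n ih =>
    refine S.continuousOn_of_forall_pos (L := fun t => V (n + 1) t s)
      (fun u hu t₀ ht₀ => ?_) u
    have hint := continuousWithinAt_integral_upper_of_dominated
      (f := fun t τ => V n t τ (S.B τ (S.U τ s u))) ht₀ (lt_add_one t₀)
      (fun t => S.aestronglyMeasurable_B_U hs u fun w =>
        (hV.continuousOn_snd n t w).mono fun τ hτ => ⟨hs.trans hτ.1.le, hτ.2⟩)
      (fun t => by
        filter_upwards [S.ae_B_U_mem_pos hu hs t, ae_restrict_mem measurableSet_Ioc]
          with τ hpos hτ
        exact hV.norm_apply_le n (hs.trans hτ.1.le) hτ.2 hpos)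
      (S.BU_integrable u hu s _ hs (ht₀.trans (lt_add_one t₀).le)).norm
      (fun τ hτ => (ih (hs.trans hτ.1.le) _ t₀ hτ.2.le).continuousAt (Ici_mem_nhds hτ.2))
    exact hint.congr (fun t ht => hV.succ n t s hs ht u) (hV.succ n t₀ s hs ht₀ u)

end IsDysonPhillips

end PerturbedSetting

theorem honesty_stmt3 {E : Type*} [NormedAddCommGroup E] [NormedSpace ℝ E]
    [CompleteSpace E] (S : PerturbedSetting E)
    (Vn : ℕ → ℝ → ℝ → E →L[ℝ] E)
    (hVn0 : ∀ t s : ℝ, 0 ≤ s → s ≤ t → ∀ u : E, Vn 0 t s u = S.U t s u)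
    (hVnrec : ∀ n : ℕ, ∀ t s : ℝ, 0 ≤ s → s ≤ t → ∀ u : E,
      Vn (n+1) t s u = ∫ r in s..t, Vn n t r (S.B r (S.U r s u)))
    :
    (∀ n : ℕ, 1 ≤ n → ∀ t : ℝ, 0 ≤ t → ∀ u : E,
      Filter.Tendsto (fun h : ℝ => Vn n (t + h) t u)
        (nhdsWithin 0 (Set.Ioi 0)) (nhds 0)) ∧
    (∀ n : ℕ, ∀ s : ℝ, 0 ≤ s → ∀ u : E,
      ContinuousOn (fun t => Vn n t s u) (Set.Ici s)) ∧
    (∀ n : ℕ, ∀ r t : ℝ, 0 ≤ r → r < t → ∀ u : E,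
      ContinuousOn (fun s => Vn n t s u) (Set.Ioo r t)) := by
  have hV : S.IsDysonPhillips Vn := ⟨hVn0, hVnrec⟩
  refine ⟨fun n hn t ht u => ?_, fun n s hs u => hV.continuousOn_fst n hs u,
    fun n r t hr _ u => (hV.continuousOn_snd n t u).mono fun s hs => ⟨hr.trans hs.1.le, hs.2⟩⟩
  obtain ⟨m, rfl⟩ := Nat.exists_eq_add_of_le' hn
  exact hV.tendsto_succ_apply_zero m ht u
end

section
/- Let Ω ⊆ ℝ^d be open, μ a Borel measure on ℝ^d with support V, Λ = Ω × V, and let Σ satisfy the kinetic assumptions. For every nonnegative f ∈ L¹(Λ, dx⊗dμ(v)) and every s ≥ 0, one has ∫_Λ Σ(t,v) [U(t,s)f](x,v) dx dμ(v) < ∞ for almost every t ∈ [s,∞), where [U(t,s)f](x,v) = exp(−∫_s^t Σ(τ,v) dτ) f(x−(t−s)v, v) 1_{{t−s < τ(x,v)}} and τ(x,v) = inf{t > 0 : x − tv ∉ Ω}. -/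
/-! For fixed `v`, `t ↦ Σ(t,v) exp(-∫_s^t Σ(τ,v) dτ)` is minus the derivative of the absolutely
continuous function `t ↦ exp(-∫_s^t Σ(τ,v) dτ)`, so its integral over `(s, ∞)` is at most `1`.
Free streaming translates `f` in `x`, which preserves Lebesgue measure, so by Tonelli
`∫_s^∞ ∫_Λ Σ(t,v) [U(t,s)f] dt` is at most `‖f‖_{L¹}`; a finite time integral forces the
integrand to be finite for almost every `t`. -/

open MeasureTheory Set Filter Topology
open scoped ENNReal

/-- Exit time of the point `x` with velocity `-v` from the open set `Ω`
(`+∞` if the backward ray stays in `Ω`). -/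
noncomputable def exitTime {d : ℕ} (Ω : Set (EuclideanSpace ℝ (Fin d)))
    (x v : EuclideanSpace ℝ (Fin d)) : ℝ≥0∞ :=
  sInf (ENNReal.ofReal '' {t : ℝ | 0 < t ∧ x - t • v ∉ Ω})

/-- The free streaming (absorption) evolution family on `L¹(Ω × V)`:
`[U(t,s)f](x,v) = exp(-∫_s^t Σ(τ,v) dτ) f(x-(t-s)v, v) 1_{t-s < τ(x,v)}`. -/
noncomputable def freeStream {d : ℕ} (Ω : Set (EuclideanSpace ℝ (Fin d)))
    (Sig : ℝ → EuclideanSpace ℝ (Fin d) → ℝ) (t s : ℝ)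
    (f : EuclideanSpace ℝ (Fin d) × EuclideanSpace ℝ (Fin d) → ℝ)
    (p : EuclideanSpace ℝ (Fin d) × EuclideanSpace ℝ (Fin d)) : ℝ :=
  if ENNReal.ofReal (t - s) < exitTime Ω p.1 p.2 then
    Real.exp (-(∫ τ in s..t, Sig τ p.2)) * f (p.1 - (t - s) • p.2, p.2)
  else 0

open scoped NNReal

theorem LipschitzOnWith.comp_absolutelyContinuousOnInterval {X Y : Type*} [PseudoMetricSpace X]
    [PseudoMetricSpace Y] {φ : X → Y} {K : ℝ≥0} {t : Set X} {f : ℝ → X} {a b : ℝ}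
    (hφ : LipschitzOnWith K φ t) (hf : AbsolutelyContinuousOnInterval f a b)
    (hft : MapsTo f (uIcc a b) t) : AbsolutelyContinuousOnInterval (φ ∘ f) a b := by
  unfold AbsolutelyContinuousOnInterval at hf ⊢
  refine squeeze_zero' (Eventually.of_forall fun E ↦ Finset.sum_nonneg fun _ _ ↦ dist_nonneg)
    ?_ (by simpa using hf.const_mul (K : ℝ))
  filter_upwards [mem_inf_of_right (mem_principal_self _)] with E hE
  rw [Finset.mul_sum]
  exact Finset.sum_le_sum fun i hi ↦
    hφ.dist_le_mul _ (hft (hE.1 i hi).1) _ (hft (hE.1 i hi).2)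

theorem AbsolutelyContinuousOnInterval.rexp {f : ℝ → ℝ} {a b : ℝ}
    (hf : AbsolutelyContinuousOnInterval f a b) :
    AbsolutelyContinuousOnInterval (fun x ↦ Real.exp (f x)) a b := by
  obtain ⟨C, hC⟩ := hf.exists_bound
  obtain ⟨K, hK⟩ := Real.contDiff_exp.contDiffOn.exists_lipschitzOnWith (n := 1) one_ne_zero
    (convex_Icc (-C) C) isCompact_Icc
  exact hK.comp_absolutelyContinuousOnInterval hf fun x hx ↦ abs_le.mp (hC x hx)

theorem IntervalIntegrable.absolutelyContinuousOnInterval_exp_neg_integral {g : ℝ → ℝ} {a b : ℝ}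
    (hg : IntervalIntegrable g volume a b) :
    AbsolutelyContinuousOnInterval (fun t ↦ Real.exp (-∫ τ in a..t, g τ)) a b :=
  (hg.absolutelyContinuousOnInterval_intervalIntegral left_mem_uIcc).neg.rexp

theorem intervalIntegral.integral_mul_exp_neg_integral {g : ℝ → ℝ} {a b : ℝ}
    (hg : IntervalIntegrable g volume a b) :
    ∫ t in a..b, g t * Real.exp (-∫ τ in a..t, g τ) = 1 - Real.exp (-∫ τ in a..b, g τ) := by
  have hderiv : ∀ᵐ t, t ∈ uIoc a b →
      -deriv (fun t ↦ Real.exp (-∫ τ in a..t, g τ)) t = g t * Real.exp (-∫ τ in a..t, g τ) := by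
    filter_upwards [hg.ae_hasDerivAt_integral] with t ht htab
    rw [((ht (uIoc_subset_uIcc htab) a left_mem_uIcc).fun_neg.exp).deriv]
    ring
  rw [← intervalIntegral.integral_congr_ae hderiv, intervalIntegral.integral_neg,
    hg.absolutelyContinuousOnInterval_exp_neg_integral.integral_deriv_eq_sub]
  simp

theorem lintegral_Ioi_mul_exp_neg_integral_le_one {g : ℝ → ℝ} {s : ℝ} (hg0 : ∀ t, 0 ≤ g t)
    (hg : ∀ T, IntegrableOn g (Icc s T)) :
    ∫⁻ t in Ioi s, ENNReal.ofReal (g t * Real.exp (-∫ τ in s..t, g τ)) ≤ 1 := by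
  have hIoi : ⋃ n : ℕ, Ioc s (s + n) = Ioi s :=
    iUnion_Ioc_eq_Ioi_self_iff.mpr fun x _ ↦
      (exists_nat_ge (x - s)).imp fun n hn ↦ by linarith
  have hmono : Monotone fun n : ℕ ↦ Ioc s (s + n) := fun m n hmn ↦
    Ioc_subset_Ioc_right (by gcongr)
  rw [← hIoi, setLIntegral_iUnion_of_directed _ hmono.directed_le]
  refine iSup_le fun n ↦ ?_
  have hsn : s ≤ s + n := by simp
  have hg' : IntervalIntegrable g volume s (s + n) :=
    (intervalIntegrable_iff_integrableOn_Ioc_of_le hsn).mpr ((hg _).mono_set Ioc_subset_Icc_self)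
  have hint : IntervalIntegrable (fun t ↦ g t * Real.exp (-∫ τ in s..t, g τ)) volume s (s + n) :=
    hg'.mul_continuousOn hg'.absolutelyContinuousOnInterval_exp_neg_integral.continuousOn
  rw [← ofReal_integral_eq_lintegral_ofReal
      hint.1 (ae_of_all _ fun t ↦ mul_nonneg (hg0 t) (Real.exp_pos _).le),
    ← intervalIntegral.integral_of_le hsn, intervalIntegral.integral_mul_exp_neg_integral hg']
  exact ENNReal.ofReal_le_one.mpr (by linarith [Real.exp_pos (-∫ τ in s..s + n, g τ)])

theorem Measurable.setIntegral_Ioc {α : Type*} [MeasurableSpace α] {F : α → ℝ → ℝ}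
    (hF : Measurable (Function.uncurry F)) {a b : α → ℝ} (ha : Measurable a) (hb : Measurable b) :
    Measurable fun x ↦ ∫ τ in Ioc (a x) (b x), F x τ := by
  simp_rw [← integral_indicator measurableSet_Ioc]
  refine StronglyMeasurable.measurable (StronglyMeasurable.integral_prod_right (ν := volume)
    (f := fun x ↦ (Ioc (a x) (b x)).indicator (F x)) (Measurable.stronglyMeasurable ?_))
  exact Measurable.ite ((measurableSet_lt (ha.comp measurable_fst) measurable_snd).inter
    (measurableSet_le measurable_snd (hb.comp measurable_fst))) hF measurable_const

theorem Measurable.intervalIntegral {α : Type*} [MeasurableSpace α] {F : α → ℝ → ℝ}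
    (hF : Measurable (Function.uncurry F)) {a b : α → ℝ} (ha : Measurable a) (hb : Measurable b) :
    Measurable fun x ↦ ∫ τ in a x..b x, F x τ :=
  (hF.setIntegral_Ioc ha hb).sub (hF.setIntegral_Ioc hb ha)

theorem Measurable.mul_exp_neg_intervalIntegral {V : Type*} [MeasurableSpace V] {g : ℝ → V → ℝ}
    (hg : Measurable (Function.uncurry g)) (s : ℝ) :
    Measurable fun q : ℝ × V ↦ g q.1 q.2 * Real.exp (-∫ τ in s..q.1, g τ q.2) := by
  have hint := Measurable.intervalIntegral (F := fun (q : ℝ × V) τ ↦ g τ q.2)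
    (hg.comp (measurable_snd.prodMk measurable_fst.snd)) (measurable_const (a := s))
    measurable_fst
  exact hg.mul (Real.measurable_exp.comp hint.neg)

section Transport

variable {E : Type*} [NormedAddCommGroup E] [MeasurableSpace E] [BorelSpace E]
  [SecondCountableTopology E] {ν μ : Measure E} [ν.IsAddRightInvariant] [SFinite ν] [SFinite μ]
  {c : ℝ → E → ℝ≥0∞} {D : ℝ → E → E} {ψ : E × E → ℝ≥0∞} {I : Set ℝ} {C : ℝ≥0∞}

theorem lintegral_lintegral_transport_le (hc : Measurable (Function.uncurry c))
    (hD : Measurable (Function.uncurry D)) (hψ : Measurable ψ)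
    (hcI : ∀ᵐ v ∂μ, ∫⁻ t in I, c t v ≤ C) :
    ∫⁻ t in I, ∫⁻ p, c t p.2 * ψ (p.1 - D t p.2, p.2) ∂(ν.prod μ)
      ≤ C * ∫⁻ p, ψ p ∂(ν.prod μ) := by
  set F : E → ℝ≥0∞ := fun v ↦ ∫⁻ x, ψ (x, v) ∂ν
  have hF : Measurable F := (hψ.comp measurable_swap).lintegral_prod_right'
  have hinner : ∀ t, ∫⁻ p, c t p.2 * ψ (p.1 - D t p.2, p.2) ∂(ν.prod μ)
      = ∫⁻ v, c t v * F v ∂μ := fun t ↦ by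
    rw [lintegral_prod_symm' _ (by fun_prop)]
    refine lintegral_congr fun v ↦ ?_
    dsimp only
    rw [lintegral_const_mul _ (by fun_prop), lintegral_sub_right_eq_self (fun x ↦ ψ (x, v))]
  calc ∫⁻ t in I, ∫⁻ p, c t p.2 * ψ (p.1 - D t p.2, p.2) ∂(ν.prod μ)
      = ∫⁻ v, (∫⁻ t in I, c t v) * F v ∂μ := by
        simp_rw [hinner]
        rw [lintegral_lintegral_swap (by fun_prop)]
        exact lintegral_congr fun v ↦ lintegral_mul_const _ (by fun_prop)
    _ ≤ ∫⁻ v, C * F v ∂μ := lintegral_mono_ae (hcI.mono fun v hv ↦ by gcongr)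
    _ = C * ∫⁻ p, ψ p ∂(ν.prod μ) := by
        rw [lintegral_const_mul _ hF, lintegral_prod_symm' _ hψ]

theorem ae_lintegral_transport_lt_top (hc : Measurable (Function.uncurry c))
    (hD : Measurable (Function.uncurry D)) (hψ : Measurable ψ)
    (hcI : ∀ᵐ v ∂μ, ∫⁻ t in I, c t v ≤ C) (hC : C ≠ ∞) (hψfin : ∫⁻ p, ψ p ∂(ν.prod μ) ≠ ∞) :
    ∀ᵐ t ∂(volume.restrict I), ∫⁻ p, c t p.2 * ψ (p.1 - D t p.2, p.2) ∂(ν.prod μ) < ∞ :=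
  ae_lt_top (Measurable.lintegral_prod_right (by fun_prop))
    (ne_top_of_le_ne_top (ENNReal.mul_ne_top hC hψfin)
      (lintegral_lintegral_transport_le hc hD hψ hcI))

end Transport

theorem sub_smul_mem_of_ofReal_lt_exitTime {d : ℕ} {Ω : Set (EuclideanSpace ℝ (Fin d))}
    {x v : EuclideanSpace ℝ (Fin d)} {r : ℝ} (hr : 0 < r)
    (hexit : ENNReal.ofReal r < exitTime Ω x v) : x - r • v ∈ Ω := by
  by_contra hout
  exact hexit.not_ge (sInf_le ⟨r, ⟨hr, hout⟩, rfl⟩)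

theorem ofReal_mul_freeStream_le {d : ℕ} (Ω : Set (EuclideanSpace ℝ (Fin d)))
    {Sig : ℝ → EuclideanSpace ℝ (Fin d) → ℝ}
    (f : EuclideanSpace ℝ (Fin d) × EuclideanSpace ℝ (Fin d) → ℝ) {s t : ℝ} (hst : s < t)
    {p : EuclideanSpace ℝ (Fin d) × EuclideanSpace ℝ (Fin d)} (hSig : 0 ≤ Sig t p.2) :
    ENNReal.ofReal (Sig t p.2 * freeStream Ω Sig t s f p)
      ≤ ENNReal.ofReal (Sig t p.2 * Real.exp (-∫ τ in s..t, Sig τ p.2))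
        * (Ω ×ˢ univ).indicator (fun q ↦ ENNReal.ofReal (f q)) (p.1 - (t - s) • p.2, p.2) := by
  unfold freeStream
  split_ifs with hexit
  · have hmem : (p.1 - (t - s) • p.2, p.2) ∈ Ω ×ˢ (univ : Set (EuclideanSpace ℝ (Fin d))) :=
      ⟨sub_smul_mem_of_ofReal_lt_exitTime (sub_pos.mpr hst) hexit, mem_univ _⟩
    rw [indicator_of_mem hmem, ← mul_assoc,
      ENNReal.ofReal_mul (mul_nonneg hSig (Real.exp_pos _).le)]
  · simp

theorem honesty_stmt16_general {d : ℕ} (μ : Measure (EuclideanSpace ℝ (Fin d))) [SFinite μ]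
    (Ω : Set (EuclideanSpace ℝ (Fin d))) (hΩ : IsOpen Ω)
    (Sig : ℝ → EuclideanSpace ℝ (Fin d) → ℝ)
    (hSmeas : Measurable (Function.uncurry Sig))
    (hSpos : ∀ t v, 0 ≤ Sig t v)
    (hSloc : ∀ᵐ v ∂μ, ∀ T : ℝ, IntegrableOn (fun t => Sig t v) (Set.Icc 0 T) volume)
    (f : EuclideanSpace ℝ (Fin d) × EuclideanSpace ℝ (Fin d) → ℝ)
    (hfmeas : Measurable f)
    (hfint : Integrable f ((volume.restrict Ω).prod μ))
    (s : ℝ) (hs : 0 ≤ s) :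
    ∀ᵐ t ∂(volume.restrict (Set.Ici s)),
      (∫⁻ p, ENNReal.ofReal (Sig t p.2 * freeStream Ω Sig t s f p)
        ∂((volume.restrict Ω).prod μ)) < ⊤ := by
  set ψ := (Ω ×ˢ univ).indicator fun q ↦ ENNReal.ofReal (f q)
  have hΩuniv : MeasurableSet (Ω ×ˢ (univ : Set (EuclideanSpace ℝ (Fin d)))) :=
    hΩ.measurableSet.prod MeasurableSet.univ
  have habsorb : ∀ᵐ v ∂μ,
      ∫⁻ t in Ioi s, ENNReal.ofReal (Sig t v * Real.exp (-∫ τ in s..t, Sig τ v)) ≤ 1 := by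
    filter_upwards [hSloc] with v hv
    exact lintegral_Ioi_mul_exp_neg_integral_le_one (hSpos · v)
      fun T ↦ (hv T).mono_set (Icc_subset_Icc_left hs)
  have hψfin : ∫⁻ p, ψ p ∂(volume.prod μ) ≠ ∞ := by
    rw [lintegral_indicator hΩuniv, ← Measure.prod_restrict, Measure.restrict_univ]
    exact (lintegral_ofReal_le_lintegral_enorm f).trans_lt hfint.2 |>.ne
  have hfinite := ae_lintegral_transport_lt_top (ν := volume) (D := fun t v ↦ (t - s) • v)
    (hSmeas.mul_exp_neg_intervalIntegral s).ennreal_ofReal (by fun_prop)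
    (hfmeas.ennreal_ofReal.indicator hΩuniv) habsorb ENNReal.one_ne_top hψfin
  rw [Measure.restrict_congr_set Ioi_ae_eq_Ici.symm]
  filter_upwards [hfinite, ae_restrict_mem measurableSet_Ioi] with t ht hst
  calc _ ≤ ∫⁻ p, ENNReal.ofReal (Sig t p.2 * Real.exp (-∫ τ in s..t, Sig τ p.2))
        * ψ (p.1 - (t - s) • p.2, p.2) ∂((volume.restrict Ω).prod μ) :=
        lintegral_mono fun p ↦ ofReal_mul_freeStream_le Ω f hst (hSpos t p.2)
    _ ≤ _ := lintegral_mono' (Measure.prod_mono Measure.restrict_le_self le_rfl) le_rfl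
    _ < ⊤ := ht

theorem honesty_stmt16 {d : ℕ} (μ : Measure (EuclideanSpace ℝ (Fin d))) [SFinite μ]
    (Ω : Set (EuclideanSpace ℝ (Fin d))) (hΩ : IsOpen Ω)
    (Sig : ℝ → EuclideanSpace ℝ (Fin d) → ℝ)
    (hSmeas : Measurable (Function.uncurry Sig))
    (hSpos : ∀ t v, 0 ≤ Sig t v)
    (hSloc : ∀ᵐ v ∂μ, ∀ T : ℝ, IntegrableOn (fun t => Sig t v) (Set.Icc 0 T) volume)
    (f : EuclideanSpace ℝ (Fin d) × EuclideanSpace ℝ (Fin d) → ℝ)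
    (hfmeas : Measurable f) (hfpos : ∀ p, 0 ≤ f p)
    (hfint : Integrable f ((volume.restrict Ω).prod μ))
    (s : ℝ) (hs : 0 ≤ s) :
    ∀ᵐ t ∂(volume.restrict (Set.Ici s)),
      (∫⁻ p, ENNReal.ofReal (Sig t p.2 * freeStream Ω Sig t s f p)
        ∂((volume.restrict Ω).prod μ)) < ⊤ :=
  honesty_stmt16_general μ Ω hΩ Sig hSmeas hSpos hSloc f hfmeas hfint s hs
end
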